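/- (Small-frequency eigenvalue asymptotics, case ρ+θ = 1) Assume additionally ρ + θ = 1. Then there exist ε ∈ (0,1) and functions λ₁, λ₂, λ₃, λ₄ : (0,ε) → ℂ such that for every r ∈ (0,ε) the multiset of roots (with multiplicity) of the characteristic polynomial of B(r) is {λ₁(r), λ₂(r), λ₃(r), λ₄(r)}, and as r → 0⁺: λ₁(r) − b²r^{2−2ρ} = O(r^{3−4ρ}), λ₂(r) − a²r^{2−2ρ} = O(r^{3−4ρ}), λ₃(r) − (r^{2ρ} + (1−b²)r^{2−2ρ}) = O(r^{3−4ρ}), and λ₄(r) − (r^{2ρ} + (1−a²)r^{2−2ρ}) = O(r^{3−4ρ}). -/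

import Mathlib

/-!
For `θ = 1 - ρ`, `B(r) = s • B₀ + (i r) • B₁` with `s = (r^{2ρ} + r^{2-2ρ}) / 2`, and `B(r)`
splits into two `2 × 2` blocks (coordinates 1, 3 and 2, 4) with characteristic polynomials
`X² - 2 s X + w r²`, `w ∈ {b², a²}`, whose roots are `s ± √(s² - w r²)`.
With `u = r^{2ρ}` and `t = r^{2-4ρ} → 0` one has `s² - w r² = (u/2)² (1 + 2ct + t²)`,
`c = 1 - 2w`, and `√(1 + 2ct + t²) = 1 + ct + O(t²)`, so the roots are `w u t + O(u t²)` and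
`u + (1 - w) u t + O(u t²)`, where `u t = r^{2-2ρ}` and `u t² = r^{4-6ρ} ≤ r^{3-4ρ}`.
-/

noncomputable section

/-- The matrix `B₀` with rows (1,0,1,0), (0,1,0,1), (1,0,1,0), (0,1,0,1). -/
def B0 : Matrix (Fin 4) (Fin 4) ℂ :=
  !![1,0,1,0; 0,1,0,1; 1,0,1,0; 0,1,0,1]

/-- The matrix `B₁ = diag(−b, −a, b, a)`. -/
def B1 (a b : ℝ) : Matrix (Fin 4) (Fin 4) ℂ :=
  !![-(b:ℂ),0,0,0; 0,-(a:ℂ),0,0; 0,0,(b:ℂ),0; 0,0,0,(a:ℂ)]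

/-- The coefficient matrix `B(r) = (1/2)(r^{2ρ}+r^{2θ})B₀ + i r B₁`. -/
def Bmat (a b ρ θ r : ℝ) : Matrix (Fin 4) (Fin 4) ℂ :=
  (((1/2) * (r ^ (2*ρ) + r ^ (2*θ)) : ℝ) : ℂ) • B0 + (Complex.I * (r : ℂ)) • B1 a b


open Asymptotics Filter Topology

open Polynomial

theorem charpoly_smul_B0_add_smul_B1 (s z : ℂ) (a b : ℝ) :
    (s • B0 + z • B1 a b).charpoly =
      (X ^ 2 - C (2 * s) * X + C (-(z * b) ^ 2)) * (X ^ 2 - C (2 * s) * X + C (-(z * a) ^ 2)) := by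
  rw [Matrix.charpoly]
  simp [B0, B1, Matrix.det_succ_row_zero, Fin.sum_univ_succ, Matrix.charmatrix_apply,
    Fin.succAbove, C_ofNat]
  ring

theorem X_sq_sub_C_mul_X_add_C_eq {R : Type*} [CommRing R] {m k p q : R}
    (hsum : p + q = m) (hprod : p * q = k) :
    X ^ 2 - C m * X + C k = (X - C p) * (X - C q) := by
  subst hsum hprod
  simp only [map_add, map_mul]
  ring

theorem roots_mul_X_sub_C_four {R : Type*} [CommRing R] [IsDomain R] (p q p' q' : R) :
    ((X - C p) * (X - C q) * ((X - C p') * (X - C q'))).roots = {p, p', q, q'} := by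
  rw [show (X - C p) * (X - C q) * ((X - C p') * (X - C q')) =
    ((({p, p', q, q'} : Multiset R)).map fun a => X - C a).prod by simp; ring]
  exact roots_multiset_prod_X_sub_C _

theorem roots_charpoly_smul_B0_add_smul_B1 {s z : ℂ} {a b : ℝ} {p q p' q' : ℂ}
    (hb_add : p + q = 2 * s) (hb_mul : p * q = -(z * b) ^ 2)
    (ha_add : p' + q' = 2 * s) (ha_mul : p' * q' = -(z * a) ^ 2) :
    (s • B0 + z • B1 a b).charpoly.roots = {p, p', q, q'} := by
  rw [charpoly_smul_B0_add_smul_B1, X_sq_sub_C_mul_X_add_C_eq hb_add hb_mul,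
    X_sq_sub_C_mul_X_add_C_eq ha_add ha_mul, roots_mul_X_sub_C_four]

theorem one_add_two_mul_add_sq_nonneg {c t : ℝ} (ht : 0 ≤ t) (hct : |c| * t ≤ 1 / 4) :
    0 ≤ 1 + 2 * c * t + t ^ 2 := by
  nlinarith [neg_abs_le c]

theorem abs_one_add_mul_sub_sqrt_le {c t : ℝ} (ht : 0 ≤ t) (hct : |c| * t ≤ 1 / 4) :
    |1 + c * t - √(1 + 2 * c * t + t ^ 2)| ≤ 2 * (c ^ 2 + 1) * t ^ 2 := by
  set y := √(1 + 2 * c * t + t ^ 2)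
  have hy : y ^ 2 = 1 + 2 * c * t + t ^ 2 := Real.sq_sqrt (one_add_two_mul_add_sq_nonneg ht hct)
  have hprod : (1 + c * t - y) * (1 + c * t + y) = (c ^ 2 - 1) * t ^ 2 := by
    linear_combination -hy
  have hden : 3 / 4 ≤ 1 + c * t + y := by
    nlinarith [neg_abs_le c, Real.sqrt_nonneg (1 + 2 * c * t + t ^ 2)]
  rw [abs_le]
  constructor <;> nlinarith [sq_nonneg t, sq_nonneg c, mul_nonneg (sq_nonneg c) (sq_nonneg t)]

def halfSum (ρ r : ℝ) : ℝ := (1 / 2) * (r ^ (2 * ρ) + r ^ (2 - 2 * ρ))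

def lowerRoot (ρ w r : ℝ) : ℝ := halfSum ρ r - √(halfSum ρ r ^ 2 - w * r ^ 2)

def upperRoot (ρ w r : ℝ) : ℝ := halfSum ρ r + √(halfSum ρ r ^ 2 - w * r ^ 2)

section

variable {ρ w r : ℝ}

theorem Bmat_eq_halfSum {a b θ : ℝ} (hsum : ρ + θ = 1) :
    Bmat a b ρ θ r = ((halfSum ρ r : ℝ) : ℂ) • B0 + (Complex.I * r) • B1 a b := by
  rw [Bmat, halfSum, show 2 * θ = 2 - 2 * ρ by linarith]

theorem rpow_two_sub_two_mul_eq (hr : 0 < r) :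
    r ^ (2 - 2 * ρ) = r ^ (2 * ρ) * r ^ (2 - 4 * ρ) := by
  rw [← Real.rpow_add hr]
  ring_nf

theorem halfSum_sq_sub_eq (hr : 0 < r) :
    halfSum ρ r ^ 2 - w * r ^ 2 = (r ^ (2 * ρ) / 2) ^ 2 *
      (1 + 2 * (1 - 2 * w) * r ^ (2 - 4 * ρ) + (r ^ (2 - 4 * ρ)) ^ 2) := by
  have hr2 : r ^ 2 = r ^ (2 * ρ) * r ^ (2 * ρ) * r ^ (2 - 4 * ρ) := by
    rw [← Real.rpow_add hr, ← Real.rpow_add hr, ← Real.rpow_natCast]; ring_nf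
  rw [halfSum, rpow_two_sub_two_mul_eq hr, hr2]
  ring

theorem lowerRoot_sub_eq (hr : 0 < r) :
    lowerRoot ρ w r - w * r ^ (2 - 2 * ρ) = r ^ (2 * ρ) / 2 *
      (1 + (1 - 2 * w) * r ^ (2 - 4 * ρ) -
        √(1 + 2 * (1 - 2 * w) * r ^ (2 - 4 * ρ) + (r ^ (2 - 4 * ρ)) ^ 2)) := by
  rw [lowerRoot, halfSum_sq_sub_eq hr, Real.sqrt_mul (sq_nonneg _),
    Real.sqrt_sq (by positivity), halfSum, rpow_two_sub_two_mul_eq hr]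
  ring

theorem upperRoot_sub_eq :
    upperRoot ρ w r - (r ^ (2 * ρ) + (1 - w) * r ^ (2 - 2 * ρ)) =
      -(lowerRoot ρ w r - w * r ^ (2 - 2 * ρ)) := by
  rw [upperRoot, lowerRoot, halfSum]
  ring

theorem rpow_mul_rpow_sq_le (hρ : ρ < 1 / 2) (hr : 0 < r) (hr1 : r ≤ 1) :
    r ^ (2 * ρ) * (r ^ (2 - 4 * ρ)) ^ 2 ≤ r ^ (3 - 4 * ρ) := by
  have h : r ^ (2 * ρ) * (r ^ (2 - 4 * ρ)) ^ 2 = r ^ (3 - 4 * ρ) * r ^ (1 - 2 * ρ) := by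
    rw [sq, ← Real.rpow_add hr, ← Real.rpow_add hr, ← Real.rpow_add hr]; ring_nf
  rw [h]
  exact mul_le_of_le_one_right (by positivity) (Real.rpow_le_one hr.le hr1 (by linarith))

theorem abs_lowerRoot_sub_le (hρ : ρ < 1 / 2) (hr : 0 < r) (hr1 : r ≤ 1)
    (hsmall : |1 - 2 * w| * r ^ (2 - 4 * ρ) ≤ 1 / 4) :
    |lowerRoot ρ w r - w * r ^ (2 - 2 * ρ)| ≤ ((1 - 2 * w) ^ 2 + 1) * r ^ (3 - 4 * ρ) := by
  rw [lowerRoot_sub_eq hr, abs_mul, abs_of_nonneg (by positivity)]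
  calc r ^ (2 * ρ) / 2 * |1 + (1 - 2 * w) * r ^ (2 - 4 * ρ) -
          √(1 + 2 * (1 - 2 * w) * r ^ (2 - 4 * ρ) + (r ^ (2 - 4 * ρ)) ^ 2)|
      ≤ r ^ (2 * ρ) / 2 * (2 * ((1 - 2 * w) ^ 2 + 1) * (r ^ (2 - 4 * ρ)) ^ 2) := by
        gcongr
        exact abs_one_add_mul_sub_sqrt_le (by positivity) hsmall
    _ = ((1 - 2 * w) ^ 2 + 1) * (r ^ (2 * ρ) * (r ^ (2 - 4 * ρ)) ^ 2) := by ring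
    _ ≤ ((1 - 2 * w) ^ 2 + 1) * r ^ (3 - 4 * ρ) := by
        gcongr
        exact rpow_mul_rpow_sq_le hρ hr hr1

theorem eventually_abs_mul_rpow_le_quarter (hρ : ρ < 1 / 2) (c : ℝ) :
    ∀ᶠ r in 𝓝[>] (0 : ℝ), 0 < r ∧ r ≤ 1 ∧ |c| * r ^ (2 - 4 * ρ) ≤ 1 / 4 := by
  have hlim : Tendsto (fun r : ℝ => |c| * r ^ (2 - 4 * ρ)) (𝓝[>] 0)
      (𝓝 (|c| * 0 ^ (2 - 4 * ρ))) :=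
    ((Real.continuousAt_rpow_const 0 _ (Or.inr (by linarith))).tendsto.const_mul _).mono_left
      nhdsWithin_le_nhds
  rw [Real.zero_rpow (by linarith), mul_zero] at hlim
  filter_upwards [self_mem_nhdsWithin, Ioo_mem_nhdsGT one_pos,
    hlim.eventually_le_const (by norm_num : (0 : ℝ) < 1 / 4)] with r hr hr1 hsmall
  exact ⟨hr, hr1.2.le, hsmall⟩

theorem eventually_halfSum_sq_sub_nonneg (hρ : ρ < 1 / 2) (w : ℝ) :
    ∀ᶠ r in 𝓝[>] (0 : ℝ), 0 ≤ halfSum ρ r ^ 2 - w * r ^ 2 := by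
  filter_upwards [eventually_abs_mul_rpow_le_quarter hρ (1 - 2 * w)] with r hsmall
  obtain ⟨hr, -, hsmall⟩ := hsmall
  rw [halfSum_sq_sub_eq hr]
  exact mul_nonneg (sq_nonneg _) (one_add_two_mul_add_sq_nonneg (by positivity) hsmall)

theorem isBigO_lowerRoot_sub (hρ : ρ < 1 / 2) (w : ℝ) :
    (fun r => lowerRoot ρ w r - w * r ^ (2 - 2 * ρ))
      =O[𝓝[>] 0] (fun r => r ^ (3 - 4 * ρ)) := by
  refine IsBigO.of_bound ((1 - 2 * w) ^ 2 + 1) ?_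
  filter_upwards [eventually_abs_mul_rpow_le_quarter hρ (1 - 2 * w)] with r hsmall
  obtain ⟨hr, hr1, hsmall⟩ := hsmall
  rw [Real.norm_eq_abs, Real.norm_of_nonneg (by positivity)]
  exact abs_lowerRoot_sub_le hρ hr hr1 hsmall

theorem isBigO_upperRoot_sub (hρ : ρ < 1 / 2) (w : ℝ) :
    (fun r => upperRoot ρ w r - (r ^ (2 * ρ) + (1 - w) * r ^ (2 - 2 * ρ)))
      =O[𝓝[>] 0] (fun r => r ^ (3 - 4 * ρ)) := by
  simpa only [upperRoot_sub_eq] using (isBigO_lowerRoot_sub hρ w).neg_left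

theorem ofReal_lowerRoot_add_upperRoot :
    (lowerRoot ρ w r : ℂ) + upperRoot ρ w r = 2 * (halfSum ρ r : ℂ) := by
  rw [← Complex.ofReal_add, lowerRoot, upperRoot]
  push_cast
  ring

theorem ofReal_lowerRoot_mul_upperRoot {b : ℝ} (h : 0 ≤ halfSum ρ r ^ 2 - b ^ 2 * r ^ 2) :
    (lowerRoot ρ (b ^ 2) r : ℂ) * upperRoot ρ (b ^ 2) r = -(Complex.I * r * b) ^ 2 := by
  have hmul : lowerRoot ρ (b ^ 2) r * upperRoot ρ (b ^ 2) r = b ^ 2 * r ^ 2 := by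
    rw [lowerRoot, upperRoot]
    linear_combination -Real.sq_sqrt h
  rw [← Complex.ofReal_mul, hmul]
  push_cast
  linear_combination ((r : ℂ) * b) ^ 2 * Complex.I_sq

end

theorem stmt5_general (a b ρ θ : ℝ)
    (hρ : ρ < 1/2)
    (hsum : ρ + θ = 1) :
    ∃ ε : ℝ, 0 < ε ∧ ε < 1 ∧ ∃ l₁ l₂ l₃ l₄ : ℝ → ℂ,
      (∀ r : ℝ, 0 < r → r < ε →
        (Bmat a b ρ θ r).charpoly.roots = {l₁ r, l₂ r, l₃ r, l₄ r}) ∧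
      (fun r : ℝ => l₁ r - ((b^2 * r ^ (2 - 2*ρ) : ℝ) : ℂ))
        =O[𝓝[>] (0:ℝ)] (fun r : ℝ => r ^ (3 - 4*ρ)) ∧
      (fun r : ℝ => l₂ r - ((a^2 * r ^ (2 - 2*ρ) : ℝ) : ℂ))
        =O[𝓝[>] (0:ℝ)] (fun r : ℝ => r ^ (3 - 4*ρ)) ∧
      (fun r : ℝ => l₃ r - ((r ^ (2*ρ) + (1 - b^2) * r ^ (2 - 2*ρ) : ℝ) : ℂ))
        =O[𝓝[>] (0:ℝ)] (fun r : ℝ => r ^ (3 - 4*ρ)) ∧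
      (fun r : ℝ => l₄ r - ((r ^ (2*ρ) + (1 - a^2) * r ^ (2 - 2*ρ) : ℝ) : ℂ))
        =O[𝓝[>] (0:ℝ)] (fun r : ℝ => r ^ (3 - 4*ρ)) := by
  obtain ⟨δ, hδ, hnonneg⟩ := (nhdsGT_basis (0 : ℝ)).eventually_iff.mp
    ((eventually_halfSum_sq_sub_nonneg hρ (b ^ 2)).and
      (eventually_halfSum_sq_sub_nonneg hρ (a ^ 2)))
  refine ⟨min δ (1 / 2), by positivity, by linarith [min_le_right δ (1 / 2)],
    fun r => lowerRoot ρ (b ^ 2) r, fun r => lowerRoot ρ (a ^ 2) r,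
    fun r => upperRoot ρ (b ^ 2) r, fun r => upperRoot ρ (a ^ 2) r, ?_, ?_, ?_, ?_, ?_⟩
  · intro r hr hrε
    obtain ⟨hb, ha⟩ := hnonneg ⟨hr, hrε.trans_le (min_le_left _ _)⟩
    rw [Bmat_eq_halfSum hsum]
    exact roots_charpoly_smul_B0_add_smul_B1 ofReal_lowerRoot_add_upperRoot
      (ofReal_lowerRoot_mul_upperRoot hb) ofReal_lowerRoot_add_upperRoot
      (ofReal_lowerRoot_mul_upperRoot ha)
  all_goals simp only [← Complex.ofReal_sub, Complex.isBigO_ofReal_left]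
  exacts [isBigO_lowerRoot_sub hρ _, isBigO_lowerRoot_sub hρ _, isBigO_upperRoot_sub hρ _,
    isBigO_upperRoot_sub hρ _]

/-- Small-frequency eigenvalue asymptotics in the case `ρ + θ = 1`. -/
theorem stmt5 (a b ρ θ : ℝ) (ha : 0 < a) (hab : a < b)
    (hρ0 : 0 ≤ ρ) (hρ : ρ < 1/2) (hθ : 1/2 < θ) (hθ1 : θ ≤ 1)
    (hsum : ρ + θ = 1) :
    ∃ ε : ℝ, 0 < ε ∧ ε < 1 ∧ ∃ l₁ l₂ l₃ l₄ : ℝ → ℂ,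
      (∀ r : ℝ, 0 < r → r < ε →
        (Bmat a b ρ θ r).charpoly.roots = {l₁ r, l₂ r, l₃ r, l₄ r}) ∧
      (fun r : ℝ => l₁ r - ((b^2 * r ^ (2 - 2*ρ) : ℝ) : ℂ))
        =O[𝓝[>] (0:ℝ)] (fun r : ℝ => r ^ (3 - 4*ρ)) ∧
      (fun r : ℝ => l₂ r - ((a^2 * r ^ (2 - 2*ρ) : ℝ) : ℂ))
        =O[𝓝[>] (0:ℝ)] (fun r : ℝ => r ^ (3 - 4*ρ)) ∧
      (fun r : ℝ => l₃ r - ((r ^ (2*ρ) + (1 - b^2) * r ^ (2 - 2*ρ) : ℝ) : ℂ))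
        =O[𝓝[>] (0:ℝ)] (fun r : ℝ => r ^ (3 - 4*ρ)) ∧
      (fun r : ℝ => l₄ r - ((r ^ (2*ρ) + (1 - a^2) * r ^ (2 - 2*ρ) : ℝ) : ℂ))
        =O[𝓝[>] (0:ℝ)] (fun r : ℝ => r ^ (3 - 4*ρ)) :=
  stmt5_general a b ρ θ hρ hsum

end
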